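/- arXiv:math/0412297 — 3 statements merged into one kernel-verified Lean document; each statement's English description precedes it below -/
import Mathlib

section
/- Let λ₁, λ₂ > 0 and h₁, h₂ be real numbers. Set H = λ₁ + λ₂, A = λ₁² + λ₂², K = λ₁λ₂ and S = h₁²/λ₁⁵ + h₂²/λ₂⁵, and define E_H = −2(λ₁² − λ₁λ₂ + λ₂²)/K − (2HA/K)·S, E_A = −2H(2λ₁² − 3λ₁λ₂ + 2λ₂²)/K − (2(3λ₁⁴ + 2λ₁³λ₂ + 2λ₁²λ₂² + 2λ₁λ₂³ + 3λ₂⁴)/K)·S, G_H = −(A²/K)·S, G_A = −(4(λ₁³ + λ₂³)²/K)·S, and G_M = −(4(λ₁³ + λ₂³)A/K)·S. Then 2H(H² − A)(H² − 3A)·E_H + 2A(H² − A)·E_A + (6(H² − A)² − 12H²(H² − 3A))·G_H + 2(H² + 2A)·G_A − 12HA·G_M = −8(λ₁ + λ₂)(λ₁ − λ₂)²λ₁λ₂ − (32λ₂³/λ₁²)·h₁² − (32λ₁³/λ₂²)·h₂². In particular, since (H² − A)⁴ = 16K⁴ > 0, the left-hand side divided by (H² − A)⁴ equals −(λ₁ +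 λ₂)(λ₁ − λ₂)²/(2λ₁³λ₂³) − 2h₁²/(λ₁⁶λ₂) − 2h₂²/(λ₁λ₂⁶) and is nonpositive. -/
/-- The computational core of the monotonicity of
`w = (2|A|² − H²)/(H² − |A|²)²` under the inverse Gauss curvature flow:
a rational-function identity in the principal curvatures `λ₁, λ₂ > 0` and the
gradient terms `h₁ = h₁₁;₁`, `h₂ = h₂₂;₂`, and the resulting nonpositivity of
the evolution of `w` at a critical point. -/
theorem stmt_3 (l1 l2 h1 h2 : ℝ) (hl1 : 0 < l1) (hl2 : 0 < l2)
    (H A K S EH EA GH GA GM : ℝ)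
    (hH : H = l1 + l2) (hA : A = l1 ^ 2 + l2 ^ 2) (hK : K = l1 * l2)
    (hS : S = h1 ^ 2 / l1 ^ 5 + h2 ^ 2 / l2 ^ 5)
    (hEH : EH = -2 * (l1 ^ 2 - l1 * l2 + l2 ^ 2) / K - (2 * H * A / K) * S)
    (hEA : EA = -2 * H * (2 * l1 ^ 2 - 3 * l1 * l2 + 2 * l2 ^ 2) / K -
      (2 * (3 * l1 ^ 4 + 2 * l1 ^ 3 * l2 + 2 * l1 ^ 2 * l2 ^ 2 +
        2 * l1 * l2 ^ 3 + 3 * l2 ^ 4) / K) * S)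
    (hGH : GH = -(A ^ 2 / K) * S)
    (hGA : GA = -(4 * (l1 ^ 3 + l2 ^ 3) ^ 2 / K) * S)
    (hGM : GM = -(4 * (l1 ^ 3 + l2 ^ 3) * A / K) * S) :
    (2 * H * (H ^ 2 - A) * (H ^ 2 - 3 * A) * EH + 2 * A * (H ^ 2 - A) * EA +
        (6 * (H ^ 2 - A) ^ 2 - 12 * H ^ 2 * (H ^ 2 - 3 * A)) * GH +
        2 * (H ^ 2 + 2 * A) * GA - 12 * H * A * GM =
      -8 * (l1 + l2) * (l1 - l2) ^ 2 * l1 * l2 -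
        (32 * l2 ^ 3 / l1 ^ 2) * h1 ^ 2 - (32 * l1 ^ 3 / l2 ^ 2) * h2 ^ 2) ∧
    ((2 * H * (H ^ 2 - A) * (H ^ 2 - 3 * A) * EH + 2 * A * (H ^ 2 - A) * EA +
        (6 * (H ^ 2 - A) ^ 2 - 12 * H ^ 2 * (H ^ 2 - 3 * A)) * GH +
        2 * (H ^ 2 + 2 * A) * GA - 12 * H * A * GM) / (H ^ 2 - A) ^ 4 =
      -((l1 + l2) * (l1 - l2) ^ 2) / (2 * l1 ^ 3 * l2 ^ 3) -
        2 * h1 ^ 2 / (l1 ^ 6 * l2) - 2 * h2 ^ 2 / (l1 * l2 ^ 6)) ∧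
    ((2 * H * (H ^ 2 - A) * (H ^ 2 - 3 * A) * EH + 2 * A * (H ^ 2 - A) * EA +
        (6 * (H ^ 2 - A) ^ 2 - 12 * H ^ 2 * (H ^ 2 - 3 * A)) * GH +
        2 * (H ^ 2 + 2 * A) * GA - 12 * H * A * GM) / (H ^ 2 - A) ^ 4 ≤ 0) := by
  have h2p : l2 ≠ 0 := hl2.ne'
  subst hH hA hK hS hEH hEA hGH hGA hGM
  have key : 2 * (l1+l2) * ((l1+l2) ^ 2 - (l1^2+l2^2)) * ((l1+l2) ^ 2 - 3 * (l1^2+l2^2)) * (-2 * (l1 ^ 2 - l1 * l2 + l2 ^ 2) / (l1*l2) - (2 * (l1+l2) * (l1^2+l2^2) / (l1*l2)) * (h1 ^ 2 / l1 ^ 5 + h2 ^ 2 / l2 ^ 5)) + 2 * (l1^2+l2^2) * ((l1+l2) ^ 2 - (l1^2+l2^2)) * (-2 * (l1+l2) * (2 * l1 ^ 2 - 3 * l1 * l2 + 2 * l2 ^ 2) / (l1*l2) - (2 * (3 * l1 ^ 4 + 2 * l1 ^ 3 * l2 + 2 * l1 ^ 2 * l2 ^ 2 + 2 * l1 * l2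 ^ 3 + 3 * l2 ^ 4) / (l1*l2)) * (h1 ^ 2 / l1 ^ 5 + h2 ^ 2 / l2 ^ 5)) +
        (6 * ((l1+l2) ^ 2 - (l1^2+l2^2)) ^ 2 - 12 * (l1+l2) ^ 2 * ((l1+l2) ^ 2 - 3 * (l1^2+l2^2))) * (-((l1^2+l2^2) ^ 2 / (l1*l2)) * (h1 ^ 2 / l1 ^ 5 + h2 ^ 2 / l2 ^ 5)) +
        2 * ((l1+l2) ^ 2 + 2 * (l1^2+l2^2)) * (-(4 * (l1 ^ 3 + l2 ^ 3) ^ 2 / (l1*l2)) * (h1 ^ 2 / l1 ^ 5 + h2 ^ 2 / l2 ^ 5)) - 12 * (l1+l2) * (l1^2+l2^2) * (-(4 * (l1 ^ 3 + l2 ^ 3) * (l1^2+l2^2) / (l1*l2)) * (h1 ^ 2 / l1 ^ 5 + h2 ^ 2 / l2 ^ 5)) =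
      -8 * (l1 + l2) * (l1 - l2) ^ 2 * l1 * l2 -
        (32 * l2 ^ 3 / l1 ^ 2) * h1 ^ 2 - (32 * l1 ^ 3 / l2 ^ 2) * h2 ^ 2 := by
    field_simp
    ring
  refine ⟨key, ?_, ?_⟩
  · rw [key]
    have hden : ((l1+l2)^2 - (l1^2+l2^2))^4 = 16 * (l1*l2)^4 := by ring
    rw [hden]
    field_simp
    ring
  · rw [key]
    have hden : ((l1+l2)^2 - (l1^2+l2^2))^4 = 16 * (l1*l2)^4 := by ring
    rw [hden]
    apply div_nonpos_of_nonpos_of_nonneg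
    · have t1 : 0 ≤ 8 * (l1 + l2) * (l1 - l2) ^ 2 * l1 * l2 := by positivity
      have t2 : 0 ≤ (32 * l2 ^ 3 / l1 ^ 2) * h1 ^ 2 := by positivity
      have t3 : 0 ≤ (32 * l1 ^ 3 / l2 ^ 2) * h2 ^ 2 := by positivity
      linarith
    · positivity
end

section
/- For all real numbers λ₁, λ₂ > 0, the polynomial 18λ₁⁹ − 9λ₁⁸λ₂ + 12λ₁⁷λ₂² + 72λ₁⁶λ₂³ − 12λ₁⁵λ₂⁴ + 70λ₁⁴λ₂⁵ + 60λ₁³λ₂⁶ + 18λ₁λ₂⁸ + 27λ₂⁹ is nonnegative. -/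
/-- Nonnegativity of the gradient-term coefficient in the evolution equation of
the improved monotone quantity under the inverse Gauss curvature flow. -/
theorem stmt_12 (l1 l2 : ℝ) (h1 : 0 < l1) (h2 : 0 < l2) :
    0 ≤ 18 * l1 ^ 9 - 9 * l1 ^ 8 * l2 + 12 * l1 ^ 7 * l2 ^ 2 +
      72 * l1 ^ 6 * l2 ^ 3 - 12 * l1 ^ 5 * l2 ^ 4 + 70 * l1 ^ 4 * l2 ^ 5 +
      60 * l1 ^ 3 * l2 ^ 6 + 18 * l1 * l2 ^ 8 + 27 * l2 ^ 9 := by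
  nlinarith [sq_nonneg (l1-l2), sq_nonneg (l1+l2), mul_pos h1 h2,
    sq_nonneg (l1^4 - l1^3*l2), sq_nonneg (l1^3*l2 - l1^2*l2^2),
    sq_nonneg (l1^2*l2^2 - l1*l2^3), pow_pos h1 7, pow_pos h2 7,
    pow_pos h1 5, pow_pos h2 5, mul_pos (pow_pos h1 5) (pow_pos h2 2),
    mul_pos (pow_pos h1 3) (pow_pos h2 4), sq_nonneg (l1^2 - l2^2),
    mul_pos (pow_pos h1 7) h2, mul_pos h1 (pow_pos h2 7)]
end

section
/- For all real numbers λ₁, λ₂ > 0, the polynomial λ₁⁶ − λ₁⁵λ₂ + 8λ₁⁴λ₂² + 2λ₁³λ₂³ + 8λ₁²λ₂⁴ − λ₁λ₂⁵ + λ₂⁶ is nonnegative. -/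
/-- Nonnegativity of a factor in the zeroth-order term of the evolution
equation of the monotone quantity for the flow with normal velocity `H³/K³`. -/
theorem stmt_15 (l1 l2 : ℝ) (h1 : 0 < l1) (h2 : 0 < l2) :
    0 ≤ l1 ^ 6 - l1 ^ 5 * l2 + 8 * l1 ^ 4 * l2 ^ 2 + 2 * l1 ^ 3 * l2 ^ 3 +
      8 * l1 ^ 2 * l2 ^ 4 - l1 * l2 ^ 5 + l2 ^ 6 := by
  nlinarith [mul_nonneg (sq_nonneg (l1-l2)) (sq_nonneg (l1^2-l2^2)), mul_nonneg (mul_pos h1 h2).le (sq_nonneg (l1^2-l2^2)), mul_pos h1 h2, sq_nonneg (l1*l2)]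
end
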